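/- arXiv:2508.14372 — 2 statements merged into one kernel-verified Lean document; each statement's English description precedes it below -/
import Mathlib

section
/- Let A be a Dehn-Sommerville p-variety and B a Dehn-Sommerville q-variety on disjoint vertex sets, where p, q ≥ −1. Then the join A ⊕ B is a Dehn-Sommerville (p+q+1)-variety. -/
open Finset

/-- A finite abstract simplicial complex: a finite set of nonempty finite sets
closed under taking nonempty subsets. -/
def IsComplex {α : Type*} (G : Finset (Finset α)) : Prop :=
  ∀ x ∈ G, x ≠ ∅ ∧ ∀ y ⊆ x, y ≠ ∅ → y ∈ G

/-- The star U(x) = {y ∈ G : x ⊆ y}. -/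
def starOf {α : Type*} [DecidableEq α] (G : Finset (Finset α)) (x : Finset α) :
    Finset (Finset α) :=
  G.filter fun y => x ⊆ y

/-- The closed ball B(x): all (nonempty) simplices contained in some member of U(x). -/
def ballOf {α : Type*} [DecidableEq α] (G : Finset (Finset α)) (x : Finset α) :
    Finset (Finset α) :=
  G.filter fun z => ∃ y ∈ G, x ⊆ y ∧ z ⊆ y

/-- The unit sphere S(x) = B(x) \ U(x). -/
def sphereOf {α : Type*} [DecidableEq α] (G : Finset (Finset α)) (x : Finset α) :
    Finset (Finset α) :=
  ballOf G x \ starOf G x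

/-- Maximal dimension of a complex; the empty complex has dimension -1. -/
def dimC {α : Type*} (G : Finset (Finset α)) : ℤ := ((G.sup Finset.card : ℕ) : ℤ) - 1

/-- Euler characteristic χ(A) = Σ_{x∈A} (−1)^{|x|−1}. -/
def chi {α : Type*} (A : Finset (Finset α)) : ℤ := ∑ x ∈ A, (-1 : ℤ) ^ (x.card - 1)

/-- The set of vertices of a complex (elements occurring in some simplex). -/
def vertexSet {α : Type*} [DecidableEq α] (G : Finset (Finset α)) : Finset α := G.sup id

/-- Dehn-Sommerville spheres, defined inductively: the empty complex is the
Dehn-Sommerville (−1)-sphere, and a complex of maximal dimension q ≥ 0 is a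
Dehn-Sommerville q-sphere if all unit spheres are Dehn-Sommerville (q−1)-spheres
and χ(G) = 1 + (−1)^q. -/
inductive IsDSSphere {α : Type*} [DecidableEq α] : ℤ → Finset (Finset α) → Prop
  | empty : IsDSSphere (-1) (∅ : Finset (Finset α))
  | step (q : ℕ) (G : Finset (Finset α)) (hC : IsComplex G) (hq : dimC G = q)
      (hS : ∀ x ∈ G, IsDSSphere ((q : ℤ) - 1) (sphereOf G x))
      (hχ : chi G = 1 + (-1) ^ q) : IsDSSphere q G

/-- A Dehn-Sommerville q-manifold: a complex of maximal dimension q all of whose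
unit spheres are Dehn-Sommerville (q−1)-spheres. -/
def IsDSManifold {α : Type*} [DecidableEq α] (q : ℤ) (G : Finset (Finset α)) : Prop :=
  IsComplex G ∧ dimC G = q ∧ ∀ x ∈ G, IsDSSphere (q - 1) (sphereOf G x)

/-- Dehn-Sommerville varieties, defined inductively: the empty complex is the
Dehn-Sommerville (−1)-variety, and a complex of maximal dimension q ≥ 0 is a
Dehn-Sommerville q-variety if all unit spheres are Dehn-Sommerville
(q−1)-varieties. -/
inductive IsDSVariety {α : Type*} [DecidableEq α] : ℤ → Finset (Finset α) → Prop
  | empty : IsDSVariety (-1) (∅ : Finset (Finset α))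
  | step (q : ℕ) (G : Finset (Finset α)) (hC : IsComplex G) (hq : dimC G = q)
      (hS : ∀ x ∈ G, IsDSVariety ((q : ℤ) - 1) (sphereOf G x)) : IsDSVariety q G

/-- The join A ⊕ B = A ∪ B ∪ {a ∪ b : a ∈ A, b ∈ B}. -/
def joinC {α : Type*} [DecidableEq α] (A B : Finset (Finset α)) : Finset (Finset α) :=
  A ∪ B ∪ (A ×ˢ B).image fun p => p.1 ∪ p.2

/-!
A Dehn-Sommerville variety is the same thing as a pure simplicial complex. In a DS variety the unit
sphere of a maximal simplex `m` consists of proper faces of `m`, so its dimension is at most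
`|m| - 2`, and the sphere condition forces `|m| = dim G + 1`. Conversely, in a pure complex the unit
sphere of `x` is again pure, of dimension one less: its facets are the `F \ {v}` with `F ⊇ x` a
facet and `v ∈ x`. Joins of pure complexes on disjoint vertex sets are pure, since facets of the
join are unions of facets, and dimensions add up to `p + q + 1`.

Adjoining the empty face, `insert ∅ A`, turns the join into the set of all unions `a ∪ b`.
-/

section

variable {α : Type*} {G A B : Finset (Finset α)} {x y z : Finset α}

lemma IsComplex.empty_notMem (hG : IsComplex G) : ∅ ∉ G := fun h => (hG ∅ h).1 rfl

lemma IsComplex.nonempty_of_mem (hG : IsComplex G) (hx : x ∈ G) : x.Nonempty :=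
  nonempty_iff_ne_empty.2 (hG x hx).1

variable [DecidableEq α]

def IsPure (G : Finset (Finset α)) : Prop :=
  ∀ x ∈ G, ∃ y ∈ G, x ⊆ y ∧ y.card = G.sup card

lemma mem_sphereOf : z ∈ sphereOf G x ↔ z ∈ G ∧ (∃ y ∈ G, x ⊆ y ∧ z ⊆ y) ∧ ¬ x ⊆ z := by
  simp only [sphereOf, ballOf, starOf, mem_sdiff, mem_filter]
  tauto

lemma IsComplex.mem_insert_empty_of_subset (hG : IsComplex G) (hx : x ∈ insert ∅ G)
    (hyx : y ⊆ x) : y ∈ insert ∅ G := by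
  by_cases hy : y = ∅
  · exact hy ▸ mem_insert_self _ _
  rcases mem_insert.1 hx with rfl | hx
  · exact absurd (subset_empty.1 hyx) hy
  · exact mem_insert_of_mem ((hG x hx).2 y hyx hy)

lemma card_le_sup_of_mem_insert_empty (hx : x ∈ insert ∅ G) : x.card ≤ G.sup card := by
  simpa using le_sup (f := card) hx

lemma exists_mem_insert_empty_card_eq_sup (G : Finset (Finset α)) :
    ∃ x ∈ insert ∅ G, x.card = G.sup card := by
  obtain ⟨x, hx, h⟩ := exists_mem_eq_sup (insert ∅ G) (insert_nonempty _ _) card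
  exact ⟨x, hx, by simpa using h.symm⟩

lemma IsPure.exists_superset (hG : IsPure G) (hx : x ∈ insert ∅ G) :
    ∃ y ∈ insert ∅ G, x ⊆ y ∧ y.card = G.sup card := by
  rcases mem_insert.1 hx with rfl | hx
  · obtain ⟨y, hy, hyc⟩ := exists_mem_insert_empty_card_eq_sup G
    exact ⟨y, hy, empty_subset y, hyc⟩
  · obtain ⟨y, hy, hxy, hyc⟩ := hG x hx
    exact ⟨y, mem_insert_of_mem hy, hxy, hyc⟩

lemma subset_vertexSet_of_mem_insert_empty (hx : x ∈ insert ∅ G) : x ⊆ vertexSet G := by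
  rcases mem_insert.1 hx with rfl | hx
  · exact empty_subset _
  · exact le_sup (f := id) hx

section Sphere

lemma isComplex_sphereOf (hG : IsComplex G) : IsComplex (sphereOf G x) := by
  intro z hz
  obtain ⟨hzG, ⟨y, hy, hxy, hzy⟩, hxz⟩ := mem_sphereOf.1 hz
  refine ⟨(hG z hzG).1, fun w hwz hw => mem_sphereOf.2 ⟨(hG z hzG).2 w hwz hw,
    ⟨y, hy, hxy, hwz.trans hzy⟩, fun hxw => hxz (hxw.trans hwz)⟩⟩

lemma card_lt_sup_of_mem_sphereOf (hz : z ∈ sphereOf G x) : z.card < G.sup card := by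
  obtain ⟨-, ⟨y, hy, hxy, hzy⟩, hxz⟩ := mem_sphereOf.1 hz
  exact (card_lt_card (ssubset_of_subset_of_ne hzy (by rintro rfl; exact hxz hxy))).trans_le
    (le_sup hy)

lemma ssubset_of_mem_sphereOf_of_maximal (hx : Maximal (· ∈ G) x) (hz : z ∈ sphereOf G x) :
    z ⊂ x := by
  obtain ⟨-, ⟨y, hy, hxy, hzy⟩, hxz⟩ := mem_sphereOf.1 hz
  exact ssubset_of_subset_not_subset (hzy.trans (hx.2 hy hxy)) hxz

lemma erase_mem_sphereOf (hG : IsComplex G) {F : Finset α} (hF : F ∈ G) (hxF : x ⊆ F) {v : α}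
    (hv : v ∈ x) (hne : (F.erase v).Nonempty) : F.erase v ∈ sphereOf G x :=
  mem_sphereOf.2 ⟨(hG F hF).2 _ (erase_subset v F) hne.ne_empty, ⟨F, hF, hxF, erase_subset v F⟩,
    fun h => notMem_erase v F (h hv)⟩

lemma sup_card_sphereOf (hG : IsComplex G) (hP : IsPure G) (hx : x ∈ G) :
    (sphereOf G x).sup card = G.sup card - 1 := by
  refine le_antisymm
    (Finset.sup_le fun z hz => Nat.le_sub_one_of_lt (card_lt_sup_of_mem_sphereOf hz)) ?_
  obtain ⟨F, hF, hxF, hFc⟩ := hP x hx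
  obtain ⟨v, hv⟩ := hG.nonempty_of_mem hx
  rw [← hFc, ← card_erase_of_mem (hxF hv)]
  rcases (F.erase v).eq_empty_or_nonempty with h | h
  · simp [h]
  · exact le_sup (erase_mem_sphereOf hG hF hxF hv h)

lemma IsPure.sphereOf (hP : IsPure G) (hG : IsComplex G) (hx : x ∈ G) :
    IsPure (sphereOf G x) := by
  intro z hz
  obtain ⟨hzG, ⟨y, hy, hxy, hzy⟩, hxz⟩ := mem_sphereOf.1 hz
  obtain ⟨F, hF, hyF, hFc⟩ := hP y hy
  obtain ⟨v, hvx, hvz⟩ := not_subset.1 hxz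
  have hzF : z ⊆ F.erase v := fun t ht => mem_erase.2 ⟨by rintro rfl; exact hvz ht, hyF (hzy ht)⟩
  refine ⟨F.erase v, erase_mem_sphereOf hG hF (hxy.trans hyF) hvx
    ((hG.nonempty_of_mem hzG).mono hzF), hzF, ?_⟩
  rw [sup_card_sphereOf hG hP hx, card_erase_of_mem (hyF (hxy hvx)), hFc]

end Sphere

section Characterization

lemma IsDSVariety.isComplex {q : ℤ} (h : IsDSVariety q G) : IsComplex G := by
  cases h with
  | empty => simp [IsComplex]
  | step _ _ hC => exact hC

lemma IsDSVariety.dimC_eq {q : ℤ} (h : IsDSVariety q G) : dimC G = q := by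
  cases h with
  | empty => simp [dimC]
  | step _ _ _ hq => exact hq

lemma IsDSVariety.isPure {q : ℤ} (h : IsDSVariety q G) : IsPure G := by
  cases h with
  | empty => simp [IsPure]
  | step n G hC hn hS =>
    intro x hx
    obtain ⟨m, hxm, hm⟩ := exists_le_maximal G hx
    refine ⟨m, hm.1, hxm, le_antisymm (le_sup hm.1) ?_⟩
    have hSm : (sphereOf G m).sup card ≤ m.card - 1 :=
      Finset.sup_le fun z hz => Nat.le_sub_one_of_lt (card_lt_card
        (ssubset_of_mem_sphereOf_of_maximal hm hz))
    have hm1 := (hC.nonempty_of_mem hm.1).card_pos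
    have := (hS m hm.1).dimC_eq
    simp only [dimC] at this hn
    omega

lemma isDSVariety_dimC (hG : IsComplex G) (hP : IsPure G) : IsDSVariety (dimC G) G := by
  obtain ⟨n, h⟩ : ∃ n, G.sup card = n := ⟨_, rfl⟩
  induction n generalizing G with
  | zero =>
    obtain rfl : G = ∅ := eq_empty_of_forall_notMem fun x hx =>
      (hG.nonempty_of_mem hx).card_pos.ne' ((Finset.sup_eq_bot_iff _ _).1 h x hx)
    simpa [dimC] using IsDSVariety.empty
  | succ n ih =>
    have hdim : dimC G = n := by simp [dimC, h]
    rw [hdim]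
    refine .step n G hG hdim fun x hx => ?_
    have hSx := sup_card_sphereOf hG hP hx
    rw [h, Nat.add_sub_cancel] at hSx
    have hdimS : dimC (sphereOf G x) = n - 1 := by simp [dimC, hSx]
    exact hdimS ▸ ih (isComplex_sphereOf hG) (hP.sphereOf hG hx) hSx

theorem isDSVariety_iff {q : ℤ} : IsDSVariety q G ↔ IsComplex G ∧ IsPure G ∧ dimC G = q :=
  ⟨fun h => ⟨h.isComplex, h.isPure, h.dimC_eq⟩,
    fun ⟨hG, hP, hq⟩ => hq ▸ isDSVariety_dimC hG hP⟩

end Characterization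

section Join

lemma exists_union_eq_of_mem_joinC (hz : z ∈ joinC A B) :
    ∃ a ∈ insert ∅ A, ∃ b ∈ insert ∅ B, a ∪ b = z := by
  simp only [joinC, mem_union, mem_image, mem_product, Prod.exists] at hz
  rcases hz with (hz | hz) | ⟨a, b, ⟨ha, hb⟩, rfl⟩
  · exact ⟨z, mem_insert_of_mem hz, ∅, mem_insert_self _ _, union_empty z⟩
  · exact ⟨∅, mem_insert_self _ _, z, mem_insert_of_mem hz, empty_union z⟩
  · exact ⟨a, mem_insert_of_mem ha, b, mem_insert_of_mem hb, rfl⟩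

lemma union_mem_insert_empty_joinC {a b : Finset α} (ha : a ∈ insert ∅ A)
    (hb : b ∈ insert ∅ B) : a ∪ b ∈ insert ∅ (joinC A B) := by
  rcases mem_insert.1 ha with rfl | ha <;> rcases mem_insert.1 hb with rfl | hb
  · simp
  · simp [joinC, hb]
  · simp [joinC, ha]
  · exact mem_insert_of_mem (mem_union_right _ (mem_image_of_mem _ (mk_mem_product ha hb)))

lemma isComplex_joinC (hA : IsComplex A) (hB : IsComplex B) : IsComplex (joinC A B) := by
  intro z hz
  refine ⟨fun h => ?_, fun y hyz hy => ?_⟩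
  · subst h
    simp [joinC, hA.empty_notMem, hB.empty_notMem] at hz
  obtain ⟨a, ha, b, hb, rfl⟩ := exists_union_eq_of_mem_joinC hz
  have hy' : y = y ∩ a ∪ y ∩ b := by rw [← inter_union_distrib_left, inter_eq_left.2 hyz]
  rw [hy'] at hy ⊢
  exact mem_of_mem_insert_of_ne (union_mem_insert_empty_joinC
    (hA.mem_insert_empty_of_subset ha inter_subset_right)
    (hB.mem_insert_empty_of_subset hb inter_subset_right)) hy

lemma card_union_of_mem_insert_empty (hd : Disjoint (vertexSet A) (vertexSet B)) {a b : Finset α}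
    (ha : a ∈ insert ∅ A) (hb : b ∈ insert ∅ B) : (a ∪ b).card = a.card + b.card :=
  card_union_of_disjoint (hd.mono (subset_vertexSet_of_mem_insert_empty ha)
    (subset_vertexSet_of_mem_insert_empty hb))

lemma sup_card_joinC (hd : Disjoint (vertexSet A) (vertexSet B)) :
    (joinC A B).sup card = A.sup card + B.sup card := by
  refine le_antisymm (Finset.sup_le fun z hz => ?_) ?_
  · obtain ⟨a, ha, b, hb, rfl⟩ := exists_union_eq_of_mem_joinC hz
    exact (card_union_le a b).trans (add_le_add (card_le_sup_of_mem_insert_empty ha)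
      (card_le_sup_of_mem_insert_empty hb))
  · obtain ⟨a, ha, hac⟩ := exists_mem_insert_empty_card_eq_sup A
    obtain ⟨b, hb, hbc⟩ := exists_mem_insert_empty_card_eq_sup B
    rw [← hac, ← hbc, ← card_union_of_mem_insert_empty hd ha hb]
    exact card_le_sup_of_mem_insert_empty (union_mem_insert_empty_joinC ha hb)

lemma dimC_joinC (hd : Disjoint (vertexSet A) (vertexSet B)) :
    dimC (joinC A B) = dimC A + dimC B + 1 := by
  simp only [dimC, sup_card_joinC hd]
  push_cast
  ring

lemma isPure_joinC (hA : IsPure A) (hB : IsPure B) (hd : Disjoint (vertexSet A) (vertexSet B)) :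
    IsPure (joinC A B) := by
  intro z hz
  obtain ⟨a, ha, b, hb, rfl⟩ := exists_union_eq_of_mem_joinC hz
  obtain ⟨a', ha', haa', ha'c⟩ := hA.exists_superset ha
  obtain ⟨b', hb', hbb', hb'c⟩ := hB.exists_superset hb
  have hc : (a' ∪ b').card = (joinC A B).sup card := by
    rw [card_union_of_mem_insert_empty hd ha' hb', ha'c, hb'c, sup_card_joinC hd]
  have hzy : a ∪ b ⊆ a' ∪ b' := union_subset_union haa' hbb'
  rcases mem_insert.1 (union_mem_insert_empty_joinC ha' hb') with h | h
  · rw [h, subset_empty] at hzy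
    rw [h, ← hzy] at hc
    exact ⟨a ∪ b, hz, subset_rfl, hc⟩
  · exact ⟨a' ∪ b', h, hzy, hc⟩

end Join

end

theorem joinC_isDSVariety_general {α : Type*} [DecidableEq α]
    (p q : ℤ) (A B : Finset (Finset α))
    (hd : Disjoint (vertexSet A) (vertexSet B))
    (hA : IsDSVariety p A) (hB : IsDSVariety q B) :
    IsDSVariety (p + q + 1) (joinC A B) := by
  obtain ⟨hAc, hAp, rfl⟩ := isDSVariety_iff.1 hA
  obtain ⟨hBc, hBp, rfl⟩ := isDSVariety_iff.1 hB
  exact isDSVariety_iff.2 ⟨isComplex_joinC hAc hBc, isPure_joinC hAp hBp hd, dimC_joinC hd⟩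

/-- The join of a Dehn-Sommerville p-variety and a Dehn-Sommerville
q-variety on disjoint vertex sets is a Dehn-Sommerville (p+q+1)-variety. -/
theorem joinC_isDSVariety {α : Type*} [DecidableEq α]
    (p q : ℤ) (hp : -1 ≤ p) (hq : -1 ≤ q) (A B : Finset (Finset α))
    (hd : Disjoint (vertexSet A) (vertexSet B))
    (hA : IsDSVariety p A) (hB : IsDSVariety q B) :
    IsDSVariety (p + q + 1) (joinC A B) :=
  joinC_isDSVariety_general p q A B hd hA hB
end

section
/- Let G be a finite abstract simplicial complex of maximal dimension q ≥ 2, and let 1 ≤ k ≤ q−1. Then (k+1) · X_{k,q}(G) = Σ_{v vertex of G} X_{k−1,q−1}(S(v)), where on the right-hand side the valuation X_{k−1,q−1} is applied to the unit sphere S(v) (a complex of maximal dimension at most q−1). -/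
open Finset

/-- f_k(G): the number of k-dimensional simplices of G. -/
def fCount {α : Type*} (G : Finset (Finset α)) (k : ℕ) : ℕ :=
  (G.filter fun x => x.card = k + 1).card

/-- The j-th entry of the Dehn-Sommerville valuation vector X_{k,q}. -/
def XvalCoeff (k q j : ℕ) : ℤ :=
  if j < k then 0
  else if j = k then (-1 : ℤ) ^ (k + q) - 1
  else (-1 : ℤ) ^ (j + q) * ((j + 1).choose (k + 1))

/-- The Dehn-Sommerville valuation X_{k,q}(H) = Σ_{j=0}^{q} X_{k,q,j} f_j(H). -/
def Xval {α : Type*} (k q : ℕ) (H : Finset (Finset α)) : ℤ :=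
  ∑ j ∈ Finset.range (q + 1), XvalCoeff k q j * (fCount H j : ℤ)

/-!
Deleting the vertex `v` is a bijection from the `(j+1)`-simplices of `G` through `v` onto the
`j`-simplices of the unit sphere `S(v)`, so double counting gives
`∑ᵥ f_j(S(v)) = (j + 2) f_{j+1}(G)`. The curvature lemma is then the coefficient identity
`(k + 1) X_{k,q,j+1} = (j + 2) X_{k-1,q-1,j}`, which away from the diagonal is the absorption
identity `(k + 1) C(j + 2, k + 1) = (j + 2) C(j + 1, k)`.
-/

theorem Finset.sum_card_filter_mem_eq_sum_card_inter {α : Type*} [DecidableEq α]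
    (s : Finset α) (B : Finset (Finset α)) :
    ∑ a ∈ s, #{b ∈ B | a ∈ b} = ∑ t ∈ B, #(s ∩ t) := by
  simp_rw [← filter_mem_eq_inter, card_eq_sum_ones, sum_filter]
  exact sum_comm

section UnitSphere

variable {α : Type*} [DecidableEq α] {G : Finset (Finset α)}

theorem subset_vertexSet {x : Finset α} (hx : x ∈ G) : x ⊆ vertexSet G :=
  fun _ ha => mem_sup.mpr ⟨x, hx, ha⟩

theorem mem_sphereOf_singleton (hC : IsComplex G) (v : α) (z : Finset α) :
    z ∈ sphereOf G {v} ↔ z ∈ G ∧ v ∉ z ∧ insert v z ∈ G := by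
  simp only [sphereOf, ballOf, starOf, mem_sdiff, mem_filter, not_and, singleton_subset_iff]
  constructor
  · rintro ⟨⟨hz, y, hy, hvy, hzy⟩, hvz⟩
    exact ⟨hz, hvz hz, (hC y hy).2 _ (insert_subset hvy hzy) (insert_ne_empty _ _)⟩
  · rintro ⟨hz, hvz, hins⟩
    exact ⟨⟨hz, insert v z, hins, mem_insert_self _ _, subset_insert _ _⟩, fun _ => hvz⟩

theorem fCount_sphereOf_singleton (hC : IsComplex G) (v : α) (j : ℕ) :
    fCount (sphereOf G {v}) j = #{x ∈ G | v ∈ x ∧ #x = j + 2} := by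
  refine card_nbij' (insert v) (fun x => x.erase v) ?_ ?_ ?_ ?_
  · intro z hz
    simp only [coe_filter, Set.mem_ofPred_eq, mem_sphereOf_singleton hC] at hz ⊢
    obtain ⟨⟨-, hvz, hins⟩, hcard⟩ := hz
    exact ⟨hins, mem_insert_self _ _, by rw [card_insert_of_notMem hvz, hcard]⟩
  · intro x hx
    simp only [coe_filter, Set.mem_ofPred_eq, mem_sphereOf_singleton hC] at hx ⊢
    obtain ⟨hxG, hvx, hcard⟩ := hx
    have hcard' : #(x.erase v) = j + 1 := by rw [card_erase_of_mem hvx, hcard]; rfl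
    have hne : x.erase v ≠ ∅ := fun h => by simp [h] at hcard'
    refine ⟨⟨(hC x hxG).2 _ (erase_subset _ _) hne, notMem_erase _ _, ?_⟩, hcard'⟩
    rwa [insert_erase hvx]
  · intro z hz
    simp only [coe_filter, Set.mem_ofPred_eq, mem_sphereOf_singleton hC] at hz
    exact erase_insert hz.1.2.1
  · intro x hx
    simp only [coe_filter, Set.mem_ofPred_eq] at hx
    exact insert_erase hx.2.1

theorem sum_fCount_sphereOf_singleton (hC : IsComplex G) (j : ℕ) :
    ∑ v ∈ vertexSet G, fCount (sphereOf G {v}) j = (j + 2) * fCount G (j + 1) := by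
  have hfilter : ∀ v, #{x ∈ G | v ∈ x ∧ #x = j + 2} = #{x ∈ {x ∈ G | #x = j + 2} | v ∈ x} :=
    fun v => by rw [filter_filter]; simp only [and_comm]
  simp_rw [fCount_sphereOf_singleton hC, hfilter, sum_card_filter_mem_eq_sum_card_inter]
  calc ∑ x ∈ G with #x = j + 2, #(vertexSet G ∩ x)
      = ∑ x ∈ G with #x = j + 2, (j + 2) := sum_congr rfl fun x hx => by
        rw [mem_filter] at hx
        rw [inter_eq_right.mpr (subset_vertexSet hx.1), hx.2]
    _ = (j + 2) * fCount G (j + 1) := by rw [sum_const, smul_eq_mul, mul_comm]; rfl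

end UnitSphere

theorem XvalCoeff_succ_zero (k q : ℕ) : XvalCoeff (k + 1) q 0 = 0 := by
  simp [XvalCoeff]

theorem add_two_mul_XvalCoeff_succ (k q j : ℕ) :
    ((k : ℤ) + 2) * XvalCoeff (k + 1) (q + 1) (j + 1) = ((j : ℤ) + 2) * XvalCoeff k q j := by
  have hsign : (-1 : ℤ) ^ (j + 1 + (q + 1)) = (-1) ^ (j + q) := by
    rw [show j + 1 + (q + 1) = j + q + 2 by ring, pow_add]; norm_num
  unfold XvalCoeff
  rcases lt_trichotomy j k with hjk | rfl | hkj
  · simp [hjk]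
  · simp [hsign]
  · rw [if_neg (by omega), if_neg (by omega), if_neg (by omega), if_neg (by omega), hsign]
    have habs : ((j + 2).choose (k + 2) : ℤ) * (k + 2) = (j + 2) * (j + 1).choose (k + 1) := by
      exact_mod_cast (Nat.add_one_mul_choose_eq (j + 1) (k + 1)).symm
    linear_combination (-1 : ℤ) ^ (j + q) * habs

theorem add_two_mul_Xval_succ {α : Type*} [DecidableEq α] {G : Finset (Finset α)}
    (hC : IsComplex G) (k q : ℕ) :
    ((k : ℤ) + 2) * Xval (k + 1) (q + 1) G
      = ∑ v ∈ vertexSet G, Xval k q (sphereOf G {v}) := by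
  unfold Xval
  rw [sum_comm, mul_sum, sum_range_succ', XvalCoeff_succ_zero, zero_mul, mul_zero, add_zero]
  refine sum_congr rfl fun j _ => ?_
  rw [← mul_sum, ← Nat.cast_sum, sum_fCount_sphereOf_singleton hC j, ← mul_assoc,
    add_two_mul_XvalCoeff_succ]
  push_cast
  ring

theorem curvature_lemma_general {α : Type*} [DecidableEq α]
    (G : Finset (Finset α)) (q k : ℕ) (hq : 2 ≤ q) (hk1 : 1 ≤ k)
    (hC : IsComplex G) :
    ((k : ℤ) + 1) * Xval k q G
      = ∑ v ∈ vertexSet G, Xval (k - 1) (q - 1) (sphereOf G {v}) := by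
  obtain ⟨k, rfl⟩ : ∃ k', k = k' + 1 := ⟨k - 1, by omega⟩
  obtain ⟨q, rfl⟩ : ∃ q', q = q' + 1 := ⟨q - 1, by omega⟩
  push_cast
  rw [add_assoc, one_add_one_eq_two]
  exact add_two_mul_Xval_succ hC k q

/-- curvature lemma: for a complex of maximal dimension q ≥ 2 and
1 ≤ k ≤ q−1, (k+1) · X_{k,q}(G) = Σ_{v vertex of G} X_{k−1,q−1}(S(v)). -/
theorem curvature_lemma {α : Type*} [DecidableEq α]
    (G : Finset (Finset α)) (q k : ℕ) (hq : 2 ≤ q) (hk1 : 1 ≤ k) (hk2 : k ≤ q - 1)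
    (hC : IsComplex G) (hdim : dimC G = q) :
    ((k : ℤ) + 1) * Xval k q G
      = ∑ v ∈ vertexSet G, Xval (k - 1) (q - 1) (sphereOf G {v}) :=
  curvature_lemma_general G q k hq hk1 hC
end
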